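/- arXiv:1907.01285 — 8 statements merged into one kernel-verified Lean document; each statement's English description precedes it below -/
import Mathlib

section
/- Let n ≥ 1, let T be an n×n real matrix, let p⁰ ∈ ℝⁿ, let N ≥ 1 be an integer and let λ > 0. Define pᵗ = p⁰ Tᵗ (row vector–matrix multiplication, Tᵗ the t-th matrix power) and the functional L[h] = (1/N) · Σ_{t=0}^{N−1} (pᵗ · (T h) − pᵗ · h) − (λ/(2N)) · ‖h‖² for h ∈ ℝⁿ, where · is the Euclidean inner product and ‖·‖ the Euclidean norm. Then the vector h* = (p⁰ Tᴺ − p⁰)/λ is the unique global maximizer of L over ℝⁿ. -/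
open Finset Matrix

/-- The vector `h* = (p⁰ Tᴺ − p⁰)/λ` is the unique global maximizer of the
L2-regularized arrow-of-time objective
`L[h] = (1/N) Σ_{t<N} (pᵗ·(Th) − pᵗ·h) − (λ/(2N)) ‖h‖²` with `pᵗ = p⁰ Tᵗ`. -/
theorem stmt_0 (n : ℕ) (hn : 1 ≤ n) (T : Matrix (Fin n) (Fin n) ℝ) (p0 : Fin n → ℝ)
    (N : ℕ) (hN : 1 ≤ N) (lam : ℝ) (hlam : 0 < lam)
    (L : (Fin n → ℝ) → ℝ)
    (hL : ∀ h : Fin n → ℝ,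
      L h = (1 / N) * ∑ t ∈ Finset.range N,
              ((p0 ᵥ* T ^ t) ⬝ᵥ (T *ᵥ h) - (p0 ᵥ* T ^ t) ⬝ᵥ h)
            - (lam / (2 * N)) * ∑ i, (h i) ^ 2)
    (hstar : Fin n → ℝ)
    (hhstar : hstar = fun i => ((p0 ᵥ* T ^ N) i - p0 i) / lam) :
    ∀ h : Fin n → ℝ, h ≠ hstar → L h < L hstar := by
  intro h hne
  have hNpos : (0:ℝ) < N := by exact_mod_cast hN
  -- telescoping sum
  have key : ∀ g : Fin n → ℝ,
      ∑ t ∈ Finset.range N, ((p0 ᵥ* T ^ t) ⬝ᵥ (T *ᵥ g) - (p0 ᵥ* T ^ t) ⬝ᵥ g)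
        = (p0 ᵥ* T ^ N) ⬝ᵥ g - p0 ⬝ᵥ g := by
    intro g
    have h1 : ∀ t, (p0 ᵥ* T ^ t) ⬝ᵥ (T *ᵥ g) = (p0 ᵥ* T ^ (t+1)) ⬝ᵥ g := by
      intro t
      rw [dotProduct_mulVec, vecMul_vecMul, ← pow_succ]
    calc ∑ t ∈ Finset.range N, ((p0 ᵥ* T ^ t) ⬝ᵥ (T *ᵥ g) - (p0 ᵥ* T ^ t) ⬝ᵥ g)
        = ∑ t ∈ Finset.range N, ((p0 ᵥ* T ^ (t+1)) ⬝ᵥ g - (p0 ᵥ* T ^ t) ⬝ᵥ g) := by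
          exact Finset.sum_congr rfl fun t _ => by rw [h1]
      _ = (p0 ᵥ* T ^ N) ⬝ᵥ g - (p0 ᵥ* T ^ 0) ⬝ᵥ g :=
          Finset.sum_range_sub (fun t => (p0 ᵥ* T ^ t) ⬝ᵥ g) N
      _ = (p0 ᵥ* T ^ N) ⬝ᵥ g - p0 ⬝ᵥ g := by rw [pow_zero, vecMul_one]
  -- q = lam • hstar
  have hq : ∀ i, (p0 ᵥ* T ^ N) i - p0 i = lam * hstar i := by
    intro i; rw [hhstar]; field_simp
  have hdot : ∀ g : Fin n → ℝ,
      (p0 ᵥ* T ^ N) ⬝ᵥ g - p0 ⬝ᵥ g = lam * ∑ i, hstar i * g i := by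
    intro g
    rw [Finset.mul_sum]
    simp only [dotProduct, ← Finset.sum_sub_distrib]
    exact Finset.sum_congr rfl fun i _ => by rw [← sub_mul, hq i]; ring
  have hLform : ∀ g : Fin n → ℝ,
      L g = (1 / N) * (lam * ∑ i, hstar i * g i) - (lam / (2 * N)) * ∑ i, (g i)^2 := by
    intro g; rw [hL, key, hdot]
  -- sum of squares identity
  have hsum : ∑ i, (h i - hstar i)^2
      = (∑ i, (h i)^2) - 2*(∑ i, hstar i * h i) + ∑ i, (hstar i)^2 := by
    rw [Finset.mul_sum, ← Finset.sum_sub_distrib, ← Finset.sum_add_distrib]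
    exact Finset.sum_congr rfl fun i _ => by ring
  have hdiff : L hstar - L h = (lam / (2 * N)) * ∑ i, (h i - hstar i)^2 := by
    rw [hLform, hLform, hsum]
    have : ∑ i, hstar i * hstar i = ∑ i, (hstar i)^2 :=
      Finset.sum_congr rfl fun i _ => (sq (hstar i)).symm
    rw [this]
    field_simp
    ring
  have hpos : 0 < ∑ i, (h i - hstar i)^2 := by
    obtain ⟨j, hj⟩ := Function.ne_iff.mp hne
    refine Finset.sum_pos' (fun i _ => sq_nonneg _) ⟨j, Finset.mem_univ j, ?_⟩
    have : h j - hstar j ≠ 0 := sub_ne_zero_of_ne hj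
    positivity
  have : 0 < L hstar - L h := by
    rw [hdiff]
    have h2N : (0:ℝ) < 2 * N := by positivity
    exact mul_pos (div_pos hlam h2N) hpos
  linarith
end

section
/- Let n ≥ 1, let T be an n×n real matrix, let p⁰ ∈ ℝⁿ satisfy p⁰ T = p⁰ (i.e., the chain is initialized at equilibrium), let N ≥ 1 and λ > 0. Define pᵗ = p⁰ Tᵗ and L[h] = (1/N) · Σ_{t=0}^{N−1} (pᵗ · (T h) − pᵗ · h) − (λ/(2N)) · ‖h‖². Then the unique global maximizer of L over ℝⁿ is the zero vector. -/
open Finset Matrix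

/-- If the chain is initialized at equilibrium (`p⁰ T = p⁰`), the unique global
maximizer of the L2-regularized arrow-of-time objective is the zero vector. -/
theorem stmt_1 (n : ℕ) (hn : 1 ≤ n) (T : Matrix (Fin n) (Fin n) ℝ) (p0 : Fin n → ℝ)
    (heq : p0 ᵥ* T = p0)
    (N : ℕ) (hN : 1 ≤ N) (lam : ℝ) (hlam : 0 < lam)
    (L : (Fin n → ℝ) → ℝ)
    (hL : ∀ h : Fin n → ℝ,
      L h = (1 / N) * ∑ t ∈ Finset.range N,
              ((p0 ᵥ* T ^ t) ⬝ᵥ (T *ᵥ h) - (p0 ᵥ* T ^ t) ⬝ᵥ h)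
            - (lam / (2 * N)) * ∑ i, (h i) ^ 2) :
    ∀ h : Fin n → ℝ, h ≠ 0 → L h < L 0 := by
  have hpt : ∀ t : ℕ, p0 ᵥ* T ^ t = p0 := by
    intro t
    induction t with
    | zero => simp
    | succ t ih => rw [pow_succ, ← vecMul_vecMul, ih, heq]
  have hLval : ∀ h : Fin n → ℝ, L h = - (lam / (2 * N)) * ∑ i, (h i) ^ 2 := by
    intro h
    rw [hL h]
    have : ∀ t ∈ Finset.range N,
        (p0 ᵥ* T ^ t) ⬝ᵥ (T *ᵥ h) - (p0 ᵥ* T ^ t) ⬝ᵥ h = 0 := by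
      intro t _
      rw [hpt, dotProduct_mulVec, heq, sub_self]
    rw [Finset.sum_congr rfl this]
    simp
  intro h hne
  rw [hLval h, hLval 0]
  have h0 : ∑ i : Fin n, ((0 : Fin n → ℝ) i) ^ 2 = 0 := by simp
  rw [h0, mul_zero]
  have hsum : 0 < ∑ i, (h i) ^ 2 := by
    obtain ⟨i, hi⟩ := Function.ne_iff.mp hne
    exact Finset.sum_pos' (fun j _ => sq_nonneg _)
      ⟨i, Finset.mem_univ i, by exact pow_two_pos_of_ne_zero (by simpa using hi)⟩
  have hc : 0 < lam / (2 * N) := by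
    apply div_pos hlam
    have : (0:ℝ) < N := by exact_mod_cast hN
    linarith
  nlinarith
end

section
/- Let n ≥ 1, let T₁ and T₂ be n×n real matrices, let p⁰, q⁰ ∈ ℝⁿ, let N ≥ 1 and λ > 0, and suppose p⁰ T₁ᴺ − p⁰ = q⁰ T₂ᴺ − q⁰. Define L₁[h] = (1/N) · Σ_{t=0}^{N−1} (p⁰T₁ᵗ · (T₁ h) − p⁰T₁ᵗ · h) − (λ/(2N)) · ‖h‖² and L₂[h] analogously with (T₂, q⁰). Then L₁ and L₂ have the same unique global maximizer, namely (p⁰ T₁ᴺ − p⁰)/λ. In other words, the L2-regularized solution depends only on the difference between the final and initial state distributions, not on the intermediate trajectory. -/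
open Finset Matrix

/-- The L2-regularized solution depends only on the difference between the final and
initial state distributions: if `p⁰ T₁ᴺ − p⁰ = q⁰ T₂ᴺ − q⁰`, then the two objectives
`L₁` and `L₂` have the same unique global maximizer `(p⁰ T₁ᴺ − p⁰)/λ`. -/
theorem stmt_3 (n : ℕ) (hn : 1 ≤ n)
    (T1 T2 : Matrix (Fin n) (Fin n) ℝ) (p0 q0 : Fin n → ℝ)
    (N : ℕ) (hN : 1 ≤ N) (lam : ℝ) (hlam : 0 < lam)
    (hsame : p0 ᵥ* T1 ^ N - p0 = q0 ᵥ* T2 ^ N - q0)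
    (L1 L2 : (Fin n → ℝ) → ℝ)
    (hL1 : ∀ h : Fin n → ℝ,
      L1 h = (1 / N) * ∑ t ∈ Finset.range N,
              ((p0 ᵥ* T1 ^ t) ⬝ᵥ (T1 *ᵥ h) - (p0 ᵥ* T1 ^ t) ⬝ᵥ h)
            - (lam / (2 * N)) * ∑ i, (h i) ^ 2)
    (hL2 : ∀ h : Fin n → ℝ,
      L2 h = (1 / N) * ∑ t ∈ Finset.range N,
              ((q0 ᵥ* T2 ^ t) ⬝ᵥ (T2 *ᵥ h) - (q0 ᵥ* T2 ^ t) ⬝ᵥ h)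
            - (lam / (2 * N)) * ∑ i, (h i) ^ 2)
    (hstar : Fin n → ℝ)
    (hhstar : hstar = fun i => ((p0 ᵥ* T1 ^ N) i - p0 i) / lam) :
    (∀ h : Fin n → ℝ, h ≠ hstar → L1 h < L1 hstar) ∧
    (∀ h : Fin n → ℝ, h ≠ hstar → L2 h < L2 hstar) := by
  have hN0 : (0:ℝ) < (N:ℝ) := by exact_mod_cast hN
  have tele : ∀ (T : Matrix (Fin n) (Fin n) ℝ) (p h : Fin n → ℝ),
      ∑ t ∈ Finset.range N, ((p ᵥ* T ^ t) ⬝ᵥ (T *ᵥ h) - (p ᵥ* T ^ t) ⬝ᵥ h)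
        = (p ᵥ* T ^ N - p) ⬝ᵥ h := by
    intro T p h
    have step : ∀ t, (p ᵥ* T ^ t) ⬝ᵥ (T *ᵥ h) = (p ᵥ* T ^ (t+1)) ⬝ᵥ h := by
      intro t
      rw [dotProduct_mulVec, vecMul_vecMul, ← pow_succ]
    calc ∑ t ∈ Finset.range N, ((p ᵥ* T ^ t) ⬝ᵥ (T *ᵥ h) - (p ᵥ* T ^ t) ⬝ᵥ h)
        = ∑ t ∈ Finset.range N, ((p ᵥ* T ^ (t+1)) ⬝ᵥ h - (p ᵥ* T ^ t) ⬝ᵥ h) := by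
          simp_rw [step]
      _ = (p ᵥ* T ^ N) ⬝ᵥ h - (p ᵥ* T ^ 0) ⬝ᵥ h :=
          Finset.sum_range_sub (fun t => (p ᵥ* T ^ t) ⬝ᵥ h) N
      _ = (p ᵥ* T ^ N - p) ⬝ᵥ h := by simp [sub_dotProduct]
  set d : Fin n → ℝ := fun i => (p0 ᵥ* T1 ^ N) i - p0 i with hd
  have hdvec : (p0 ᵥ* T1 ^ N - p0) = d := rfl
  have hdvec2 : (q0 ᵥ* T2 ^ N - q0) = d := by rw [← hsame]; rfl
  have quad : ∀ (L : (Fin n → ℝ) → ℝ),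
      (∀ h, L h = (1/(N:ℝ)) * (d ⬝ᵥ h) - (lam/(2*N)) * ∑ i, (h i)^2) →
      ∀ h, h ≠ hstar → L h < L hstar := by
    intro L hL h hne
    rw [hL h, hL hstar, ← sub_pos]
    have key : (1/(N:ℝ)) * (d ⬝ᵥ hstar) - (lam/(2*N)) * ∑ i, (hstar i)^2
        - ((1/(N:ℝ)) * (d ⬝ᵥ h) - (lam/(2*N)) * ∑ i, (h i)^2)
        = (lam/(2*N)) * ∑ i, (h i - hstar i)^2 := by
      simp only [dotProduct, hhstar, Finset.mul_sum, ← Finset.sum_sub_distrib,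
        ← Finset.sum_add_distrib]
      apply Finset.sum_congr rfl
      intro i _
      field_simp
      ring
    rw [key]
    obtain ⟨i, hi⟩ := Function.ne_iff.mp hne
    have hsum : 0 < ∑ i, (h i - hstar i)^2 :=
      Finset.sum_pos' (fun j _ => sq_nonneg _)
        ⟨i, Finset.mem_univ i, by have := sub_ne_zero.mpr hi; positivity⟩
    have hc : 0 < lam/(2*(N:ℝ)) := by positivity
    exact mul_pos hc hsum
  have hL1' : ∀ h, L1 h = (1/(N:ℝ)) * (d ⬝ᵥ h) - (lam/(2*N)) * ∑ i, (h i)^2 := by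
    intro h; rw [hL1, tele T1 p0 h, hdvec]
  have hL2' : ∀ h, L2 h = (1/(N:ℝ)) * (d ⬝ᵥ h) - (lam/(2*N)) * ∑ i, (h i)^2 := by
    intro h; rw [hL2, tele T2 q0 h, hdvec2]
  exact ⟨quad L1 hL1', quad L2 hL2'⟩
end

section
/- Let α ∈ [0,1] and let T be the 2×2 matrix with both rows equal to (1−α, α), i.e., T₁₁ = T₂₁ = 1−α and T₁₂ = T₂₂ = α. Let p⁰ = (1/2, 1/2), N ≥ 1 and λ > 0, and define L[h] = (1/N) · Σ_{t=0}^{N−1} (p⁰Tᵗ · (T h) − p⁰Tᵗ · h) − (λ/(2N)) · ‖h‖² for h ∈ ℝ². Then p⁰ Tᴺ = (1−α, α), and the unique global maximizer of L is h = ((1/2 − α)/λ, (α − 1/2)/λ), i.e., h = (−γ, γ)/λ with γ = α − 1/2. -/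
open Finset Matrix

/-- Two-state chain with both rows `(1−α, α)` and `p⁰ = (1/2, 1/2)`: then
`p⁰ Tᴺ = (1−α, α)` and the unique global maximizer of the L2-regularized objective
is `h = ((1/2 − α)/λ, (α − 1/2)/λ)`. -/
theorem stmt_4 (α : ℝ) (hα : α ∈ Set.Icc (0 : ℝ) 1)
    (T : Matrix (Fin 2) (Fin 2) ℝ) (hT : T = !![1 - α, α; 1 - α, α])
    (p0 : Fin 2 → ℝ) (hp0 : p0 = ![1 / 2, 1 / 2])
    (N : ℕ) (hN : 1 ≤ N) (lam : ℝ) (hlam : 0 < lam)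
    (L : (Fin 2 → ℝ) → ℝ)
    (hL : ∀ h : Fin 2 → ℝ,
      L h = (1 / N) * ∑ t ∈ Finset.range N,
              ((p0 ᵥ* T ^ t) ⬝ᵥ (T *ᵥ h) - (p0 ᵥ* T ^ t) ⬝ᵥ h)
            - (lam / (2 * N)) * ∑ i, (h i) ^ 2)
    (hstar : Fin 2 → ℝ)
    (hhstar : hstar = ![(1 / 2 - α) / lam, (α - 1 / 2) / lam]) :
    p0 ᵥ* T ^ N = ![1 - α, α] ∧
    (∀ h : Fin 2 → ℝ, h ≠ hstar → L h < L hstar) := by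
  subst hT hp0 hhstar
  have hNR : (0 : ℝ) < (N : ℝ) := by exact_mod_cast hN
  have hq1 : (![1/2, 1/2] : Fin 2 → ℝ) ᵥ* !![1 - α, α; 1 - α, α] = ![1 - α, α] := by
    funext i; fin_cases i <;>
      simp [Matrix.vecMul, dotProduct, Fin.sum_univ_two] <;> ring
  have hq2 : (![1 - α, α] : Fin 2 → ℝ) ᵥ* !![1 - α, α; 1 - α, α] = ![1 - α, α] := by
    funext i; fin_cases i <;>
      simp [Matrix.vecMul, dotProduct, Fin.sum_univ_two] <;> ring
  have hpow : ∀ t : ℕ,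
      (![1/2, 1/2] : Fin 2 → ℝ) ᵥ* (!![1 - α, α; 1 - α, α]) ^ (t + 1) = ![1 - α, α] := by
    intro t
    induction t with
    | zero => simpa using hq1
    | succ n ih => rw [pow_succ, ← Matrix.vecMul_vecMul, ih, hq2]
  have hLval : ∀ h : Fin 2 → ℝ,
      L h = (1 / (N : ℝ)) * ((α - 1/2) * (h 1 - h 0))
            - (lam / (2 * N)) * ((h 0) ^ 2 + (h 1) ^ 2) := by
    intro h
    rw [hL]
    have hterm : ∀ t ∈ Finset.range N,
        ((![1/2, 1/2] : Fin 2 → ℝ) ᵥ* (!![1 - α, α; 1 - α, α]) ^ t) ⬝ᵥ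
            ((!![1 - α, α; 1 - α, α]) *ᵥ h)
          - ((![1/2, 1/2] : Fin 2 → ℝ) ᵥ* (!![1 - α, α; 1 - α, α]) ^ t) ⬝ᵥ h
        = if t = 0 then (α - 1/2) * (h 1 - h 0) else 0 := by
      intro t _
      cases t with
      | zero =>
        simp [Matrix.mulVec, Matrix.vecMul, dotProduct, Fin.sum_univ_two]
        ring
      | succ n =>
        rw [hpow n]
        simp [Matrix.mulVec, Matrix.vecMul, dotProduct, Fin.sum_univ_two]
        ring
    rw [Finset.sum_congr rfl hterm, Finset.sum_ite_eq' (Finset.range N) 0]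
    have h0mem : (0 : ℕ) ∈ Finset.range N := Finset.mem_range.mpr hN
    rw [if_pos h0mem, Fin.sum_univ_two]
  constructor
  · obtain ⟨M, rfl⟩ : ∃ M, N = M + 1 := ⟨N - 1, (Nat.succ_pred_eq_of_pos hN).symm⟩
    exact hpow M
  · intro h hne
    have hst0 : (![(1 / 2 - α) / lam, (α - 1 / 2) / lam] : Fin 2 → ℝ) 0 = (1/2 - α) / lam := rfl
    have hst1 : (![(1 / 2 - α) / lam, (α - 1 / 2) / lam] : Fin 2 → ℝ) 1 = (α - 1/2) / lam := rfl
    have key : L ![(1 / 2 - α) / lam, (α - 1 / 2) / lam] - L h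
        = (lam / (2 * N)) * ((h 0 + (α - 1/2) / lam) ^ 2 + (h 1 - (α - 1/2) / lam) ^ 2) := by
      rw [hLval, hLval, hst0, hst1]
      field_simp
      ring
    have hcases : h 0 ≠ (1/2 - α) / lam ∨ h 1 ≠ (α - 1/2) / lam := by
      by_contra hc
      push_neg at hc
      exact hne (by funext i; fin_cases i <;> simp [hc.1, hc.2])
    have hpos : 0 < (h 0 + (α - 1/2) / lam) ^ 2 + (h 1 - (α - 1/2) / lam) ^ 2 := by
      rcases hcases with hne0 | hne1
      · have : h 0 + (α - 1/2) / lam ≠ 0 := by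
          intro hz; apply hne0; field_simp at hz ⊢; linarith
        nlinarith [sq_nonneg (h 1 - (α - 1/2) / lam), sq_pos_of_ne_zero this]
      · have : h 1 - (α - 1/2) / lam ≠ 0 := by
          intro hz; apply hne1; linarith [sub_eq_zero.mp hz]
        nlinarith [sq_nonneg (h 0 + (α - 1/2) / lam), sq_pos_of_ne_zero this]
    have hcoef : 0 < lam / (2 * N) := by positivity
    nlinarith [mul_pos hcoef hpos]
end

section
/- Let T be the 4×4 matrix of the deterministic chain s₁ → s₂ → s₃ → s₄ with absorbing state s₄, i.e., T₁₂ = T₂₃ = T₃₄ = T₄₄ = 1 and all other entries 0. Let p⁰ = (1, 0, 0, 0), let N ≥ 3 and λ > 0, and define L[h] = (1/N) · Σ_{t=0}^{N−1} (p⁰Tᵗ · (T h) − p⁰Tᵗ · h) − (λ/(2N)) · ‖h‖² for h ∈ ℝ⁴. Then p⁰ Tᴺ = (0, 0, 0, 1), and the unique global maximizer of L is h = (−1/λ, 0, 0, 1/λ); in particular h₂ = h₃, so the L2-regularized solution assigns equal values to the two intermediate states despite the transition between them being irreversible. -/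
open Finset Matrix

/-- Deterministic chain `s₁ → s₂ → s₃ → s₄` with absorbing `s₄`, started at `s₁`:
`p⁰ Tᴺ = (0,0,0,1)` for `N ≥ 3`, and the unique global maximizer of the
L2-regularized objective is `h = (−1/λ, 0, 0, 1/λ)`; in particular `h₂ = h₃`. -/
theorem stmt_6 (T : Matrix (Fin 4) (Fin 4) ℝ)
    (hT : T = !![0, 1, 0, 0; 0, 0, 1, 0; 0, 0, 0, 1; 0, 0, 0, 1])
    (p0 : Fin 4 → ℝ) (hp0 : p0 = ![1, 0, 0, 0])
    (N : ℕ) (hN : 3 ≤ N) (lam : ℝ) (hlam : 0 < lam)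
    (L : (Fin 4 → ℝ) → ℝ)
    (hL : ∀ h : Fin 4 → ℝ,
      L h = (1 / N) * ∑ t ∈ Finset.range N,
              ((p0 ᵥ* T ^ t) ⬝ᵥ (T *ᵥ h) - (p0 ᵥ* T ^ t) ⬝ᵥ h)
            - (lam / (2 * N)) * ∑ i, (h i) ^ 2)
    (hstar : Fin 4 → ℝ)
    (hhstar : hstar = ![-(1 / lam), 0, 0, 1 / lam]) :
    p0 ᵥ* T ^ N = ![0, 0, 0, 1] ∧
    (∀ h : Fin 4 → ℝ, h ≠ hstar → L h < L hstar) ∧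
    hstar 1 = hstar 2 := by
  have e1 : p0 ᵥ* T = ![0, 1, 0, 0] := by
    subst hT hp0
    funext i; fin_cases i <;>
      simp [Matrix.vecMul, dotProduct, Fin.sum_univ_four, Matrix.vecHead, Matrix.vecTail]
  have e2 : (![0, 1, 0, 0] : Fin 4 → ℝ) ᵥ* T = ![0, 0, 1, 0] := by
    subst hT
    funext i; fin_cases i <;>
      simp [Matrix.vecMul, dotProduct, Fin.sum_univ_four, Matrix.vecHead, Matrix.vecTail]
  have e3 : (![0, 0, 1, 0] : Fin 4 → ℝ) ᵥ* T = ![0, 0, 0, 1] := by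
    subst hT
    funext i; fin_cases i <;>
      simp [Matrix.vecMul, dotProduct, Fin.sum_univ_four, Matrix.vecHead, Matrix.vecTail]
  have e4 : (![0, 0, 0, 1] : Fin 4 → ℝ) ᵥ* T = ![0, 0, 0, 1] := by
    subst hT
    funext i; fin_cases i <;>
      simp [Matrix.vecMul, dotProduct, Fin.sum_univ_four, Matrix.vecHead, Matrix.vecTail]
  -- p0 T^t = e4 for all t ≥ 3
  have habs : ∀ k : ℕ, p0 ᵥ* T ^ (3 + k) = ![0, 0, 0, 1] := by
    intro k
    induction k with
    | zero =>
      show p0 ᵥ* T ^ 3 = _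
      rw [pow_succ, pow_succ, pow_one, ← Matrix.vecMul_vecMul,
        ← Matrix.vecMul_vecMul, e1, e2, e3]
    | succ n ih =>
      rw [show 3 + (n + 1) = (3 + n) + 1 from rfl, pow_succ,
        ← Matrix.vecMul_vecMul, ih, e4]
  have hpN : p0 ᵥ* T ^ N = ![0, 0, 0, 1] := by
    obtain ⟨k, rfl⟩ := Nat.exists_eq_add_of_le hN
    exact habs k
  have hNpos : (0 : ℝ) < N := by positivity
  have hNne : (N : ℝ) ≠ 0 := ne_of_gt hNpos
  -- simplified form of L
  have hLsimp : ∀ h : Fin 4 → ℝ,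
      L h = (1 / N) * (h 3 - h 0)
        - (lam / (2 * N)) * ((h 0) ^ 2 + (h 1) ^ 2 + (h 2) ^ 2 + (h 3) ^ 2) := by
    intro h
    have hterm : ∀ t : ℕ,
        (p0 ᵥ* T ^ t) ⬝ᵥ (T *ᵥ h) - (p0 ᵥ* T ^ t) ⬝ᵥ h
          = (p0 ᵥ* T ^ (t + 1)) ⬝ᵥ h - (p0 ᵥ* T ^ t) ⬝ᵥ h := by
      intro t
      rw [Matrix.dotProduct_mulVec, Matrix.vecMul_vecMul, ← pow_succ]
    have hsum : ∑ t ∈ Finset.range N,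
        ((p0 ᵥ* T ^ t) ⬝ᵥ (T *ᵥ h) - (p0 ᵥ* T ^ t) ⬝ᵥ h)
          = (p0 ᵥ* T ^ N) ⬝ᵥ h - (p0 ᵥ* T ^ 0) ⬝ᵥ h := by
      rw [Finset.sum_congr rfl fun t _ => hterm t]
      exact Finset.sum_range_sub (fun t => (p0 ᵥ* T ^ t) ⬝ᵥ h) N
    rw [hL h, hsum, hpN, pow_zero, Matrix.vecMul_one, hp0,
      Fin.sum_univ_four]
    simp [dotProduct, Fin.sum_univ_four]
  refine ⟨hpN, ?_, by simp [hhstar]⟩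
  intro h hne
  have hlamne : lam ≠ 0 := ne_of_gt hlam
  have key : L hstar - L h
      = lam / (2 * N) * ((h 0 + 1 / lam) ^ 2 + (h 1) ^ 2 + (h 2) ^ 2
        + (h 3 - 1 / lam) ^ 2) := by
    rw [hLsimp, hLsimp, hhstar]
    simp only [Matrix.cons_val_zero, Matrix.cons_val_one, Matrix.head_cons,
      Matrix.cons_val_two, Matrix.tail_cons, Matrix.cons_val_three]
    field_simp
    ring
  have hS : 0 < (h 0 + 1 / lam) ^ 2 + (h 1) ^ 2 + (h 2) ^ 2
      + (h 3 - 1 / lam) ^ 2 := by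
    obtain ⟨i, hi⟩ := Function.ne_iff.mp hne
    rw [hhstar] at hi
    fin_cases i <;> simp at hi
    · have : h 0 + 1 / lam ≠ 0 := by
        intro h0; apply hi; simp only [one_div] at h0; linarith
      nlinarith [sq_nonneg (h 1), sq_nonneg (h 2), sq_nonneg (h 3 - 1 / lam),
        sq_pos_of_ne_zero this]
    · nlinarith [sq_nonneg (h 0 + 1 / lam), sq_nonneg (h 2),
        sq_nonneg (h 3 - 1 / lam), sq_pos_of_ne_zero hi]
    · nlinarith [sq_nonneg (h 0 + 1 / lam), sq_nonneg (h 1),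
        sq_nonneg (h 3 - 1 / lam), sq_pos_of_ne_zero hi]
    · have : h 3 - 1 / lam ≠ 0 := by
        intro h0; apply hi; simp only [one_div] at h0; linarith
      nlinarith [sq_nonneg (h 0 + 1 / lam), sq_nonneg (h 1), sq_nonneg (h 2),
        sq_pos_of_ne_zero this]
  have hpos : 0 < lam / (2 * N) := by positivity
  nlinarith [mul_pos hpos hS]
end

section
/- Let n ≥ 1, let T be an n×n real matrix, p⁰ ∈ ℝⁿ, N ≥ 1, λ > 0 and ω ≥ 0. Define pᵗ = p⁰ Tᵗ and the trajectory-regularized objective L[h] = (1/N) · Σ_{t=0}^{N−1} (pᵗ · ((T − I)h)) − (λ/(2N)) · Σ_{t=0}^{N−1} (pᵗ · ((T − I)h))² − (λω/(2N)) · ‖h‖² for h ∈ ℝⁿ. Then h is a critical point of L (i.e., the gradient of L at h is zero) if and only if λ · [ Σ_{t=0}^{N−1} (p⁰(Tᵗ⁺¹ − Tᵗ) · h) · p⁰(Tᵗ⁺¹ − Tᵗ) + ω h ] = p⁰ Tᴺ − p⁰, where p⁰(Tᵗ⁺¹ − Tᵗ) ∈ ℝⁿ denotes the row vector p⁰Tᵗ⁺¹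 − p⁰Tᵗ. -/
/-!
Since `(p⁰Tᵗ) · ((T - I)h) = qₜ · h` with `qₜ = p⁰Tᵗ⁺¹ - p⁰Tᵗ`, and the `qₜ` telescope to
`p⁰Tᴺ - p⁰`, the objective is the explicit quadratic
`L h = (1/N) (p⁰Tᴺ - p⁰) · h - (λ/2N) Σₜ (qₜ · h)² - (λω/2N) ‖h‖²`.
Its derivative at `h` is the functional `v ↦ g · v` with
`g = (1/N) (p⁰Tᴺ - p⁰ - λ (Σₜ (qₜ · h) qₜ + ω h))`, and it vanishes iff `g = 0`.
-/

open Finset Matrix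

section DotProductCalculus

variable {ι : Type*} [Fintype ι] [DecidableEq ι]

noncomputable def dotProductCLMEquiv : (ι → ℝ) ≃ₗ[ℝ] ((ι → ℝ) →L[ℝ] ℝ) :=
  (dotProductEquiv ℝ ι).trans LinearMap.toContinuousLinearMap

@[simp]
lemma dotProductCLMEquiv_apply (c v : ι → ℝ) : dotProductCLMEquiv c v = c ⬝ᵥ v := rfl

lemma hasFDerivAt_dotProduct (c x : ι → ℝ) :
    HasFDerivAt (c ⬝ᵥ ·) (dotProductCLMEquiv c) x :=
  (dotProductCLMEquiv c).hasFDerivAt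

lemma hasFDerivAt_sum_dotProduct_sq {κ : Type*} (s : Finset κ) (q : κ → ι → ℝ) (x : ι → ℝ) :
    HasFDerivAt (fun v => ∑ t ∈ s, (q t ⬝ᵥ v) ^ 2)
      (dotProductCLMEquiv ((2 : ℝ) • ∑ t ∈ s, (q t ⬝ᵥ x) • q t)) x := by
  refine (HasFDerivAt.fun_sum fun t _ => (hasFDerivAt_dotProduct (q t) x).pow 2).congr_fderiv ?_
  simp only [map_smul, map_sum, Finset.smul_sum, smul_smul]
  refine Finset.sum_congr rfl fun t _ => ?_
  norm_num

lemma hasFDerivAt_sum_sq (x : ι → ℝ) :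
    HasFDerivAt (fun v : ι → ℝ => ∑ i, v i ^ 2) (dotProductCLMEquiv ((2 : ℝ) • x)) x := by
  refine (HasFDerivAt.fun_sum fun i _ =>
    (hasFDerivAt_apply (𝕜 := ℝ) (F' := fun _ => ℝ) i x).pow 2).congr_fderiv ?_
  ext v
  simp [dotProduct, Finset.mul_sum, mul_assoc]

lemma hasFDerivAt_dotProduct_sub_sum_sq_sub_sum_sq {κ : Type*} (a b c : ℝ) (w : ι → ℝ)
    (s : Finset κ) (q : κ → ι → ℝ) (x : ι → ℝ) :
    HasFDerivAt (fun v => a * (w ⬝ᵥ v) - b * ∑ t ∈ s, (q t ⬝ᵥ v) ^ 2 - c * ∑ i, v i ^ 2)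
      (dotProductCLMEquiv (a • w - (2 * b) • ∑ t ∈ s, (q t ⬝ᵥ x) • q t - (2 * c) • x)) x := by
  refine ((((hasFDerivAt_dotProduct w x).const_mul a).sub
    ((hasFDerivAt_sum_dotProduct_sq s q x).const_mul b)).sub
    ((hasFDerivAt_sum_sq x).const_mul c)).congr_fderiv ?_
  simp only [map_sub, map_smul, smul_smul, mul_comm _ (2 : ℝ)]

end DotProductCalculus

lemma vecMul_pow_dotProduct_sub_one_mulVec {m R : Type*} [Fintype m] [DecidableEq m] [CommRing R]
    (p : m → R) (T : Matrix m m R) (t : ℕ) (v : m → R) :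
    (p ᵥ* T ^ t) ⬝ᵥ ((T - 1) *ᵥ v) = (p ᵥ* T ^ (t + 1) - p ᵥ* T ^ t) ⬝ᵥ v := by
  rw [dotProduct_mulVec, vecMul_sub, vecMul_vecMul, vecMul_one, ← pow_succ]

theorem stmt_7_general (n : ℕ) (T : Matrix (Fin n) (Fin n) ℝ) (p0 : Fin n → ℝ)
    (N : ℕ) (hN : 1 ≤ N) (lam ω : ℝ)
    (L : (Fin n → ℝ) → ℝ)
    (hL : ∀ h : Fin n → ℝ,
      L h = (1 / N) * ∑ t ∈ Finset.range N,
              ((p0 ᵥ* T ^ t) ⬝ᵥ ((T - 1) *ᵥ h))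
            - (lam / (2 * N)) * ∑ t ∈ Finset.range N,
              ((p0 ᵥ* T ^ t) ⬝ᵥ ((T - 1) *ᵥ h)) ^ 2
            - (lam * ω / (2 * N)) * ∑ i, (h i) ^ 2) :
    ∀ h : Fin n → ℝ,
      fderiv ℝ L h = 0 ↔
      lam • (∑ t ∈ Finset.range N,
              (((p0 ᵥ* T ^ (t + 1) - p0 ᵥ* T ^ t) ⬝ᵥ h) •
                (p0 ᵥ* T ^ (t + 1) - p0 ᵥ* T ^ t))
            + ω • h)
        = p0 ᵥ* T ^ N - p0 := by
  intro h
  set q : ℕ → Fin n → ℝ := fun t => p0 ᵥ* T ^ (t + 1) - p0 ᵥ* T ^ t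
  have hq : ∑ t ∈ range N, q t = p0 ᵥ* T ^ N - p0 := by
    rw [Finset.sum_range_sub (fun t => p0 ᵥ* T ^ t), pow_zero, vecMul_one]
  have hL' : L = fun v => (1 / N : ℝ) * ((p0 ᵥ* T ^ N - p0) ⬝ᵥ v)
      - (lam / (2 * N)) * ∑ t ∈ range N, (q t ⬝ᵥ v) ^ 2 - (lam * ω / (2 * N)) * ∑ i, v i ^ 2 := by
    funext v
    simp only [hL, vecMul_pow_dotProduct_sub_one_mulVec, ← hq, sum_dotProduct, q]
  have hN' : (N : ℝ) ≠ 0 := Nat.cast_ne_zero.mpr (by omega)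
  have hgrad : (1 / N : ℝ) • (p0 ᵥ* T ^ N - p0)
      - (2 * (lam / (2 * N))) • ∑ t ∈ range N, (q t ⬝ᵥ h) • q t - (2 * (lam * ω / (2 * N))) • h
      = (N : ℝ)⁻¹ • (p0 ᵥ* T ^ N - p0 - lam • (∑ t ∈ range N, (q t ⬝ᵥ h) • q t + ω • h)) := by
    field_simp
    module
  rw [hL', (hasFDerivAt_dotProduct_sub_sum_sq_sub_sum_sq _ _ _ _ _ _ h).fderiv, hgrad,
    LinearEquiv.map_eq_zero_iff, smul_eq_zero_iff_right (inv_ne_zero hN'), sub_eq_zero, eq_comm]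

/-- Critical-point characterization of the trajectory-regularized objective:
`h` has vanishing gradient iff
`λ·[Σ_t (p⁰(Tᵗ⁺¹−Tᵗ)·h)·p⁰(Tᵗ⁺¹−Tᵗ) + ω h] = p⁰Tᴺ − p⁰`. -/
theorem stmt_7 (n : ℕ) (hn : 1 ≤ n) (T : Matrix (Fin n) (Fin n) ℝ) (p0 : Fin n → ℝ)
    (N : ℕ) (hN : 1 ≤ N) (lam ω : ℝ) (hlam : 0 < lam) (hω : 0 ≤ ω)
    (L : (Fin n → ℝ) → ℝ)
    (hL : ∀ h : Fin n → ℝ,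
      L h = (1 / N) * ∑ t ∈ Finset.range N,
              ((p0 ᵥ* T ^ t) ⬝ᵥ ((T - 1) *ᵥ h))
            - (lam / (2 * N)) * ∑ t ∈ Finset.range N,
              ((p0 ᵥ* T ^ t) ⬝ᵥ ((T - 1) *ᵥ h)) ^ 2
            - (lam * ω / (2 * N)) * ∑ i, (h i) ^ 2) :
    ∀ h : Fin n → ℝ,
      fderiv ℝ L h = 0 ↔
      lam • (∑ t ∈ Finset.range N,
              (((p0 ᵥ* T ^ (t + 1) - p0 ᵥ* T ^ t) ⬝ᵥ h) •
                (p0 ᵥ* T ^ (t + 1) - p0 ᵥ* T ^ t))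
            + ω • h)
        = p0 ᵥ* T ^ N - p0 :=
  stmt_7_general n T p0 N hN lam ω L hL
end

section
/- Let α ∈ [0,1], λ > 0, ω > 0, and let T be the 2×2 matrix with both rows equal to (1−α, α) and p⁰ = (1/2, 1/2). Set γ̃ = (2α − 1) / (λ · (4α² − 4α + 2ω + 1)). Then for every N ≥ 1 the vector h = (−γ̃, γ̃) satisfies the stationarity equation λ · [ Σ_{t=0}^{N−1} (p⁰(Tᵗ⁺¹ − Tᵗ) · h) · p⁰(Tᵗ⁺¹ − Tᵗ) + ω h ] = p⁰ Tᴺ − p⁰, and hence is the unique global maximizer of the trajectory-regularized objective L[h] = (1/N)Σ_{t=0}^{N−1}(p⁰Tᵗ·((T−I)h)) − (λ/(2N))Σ_{t=0}^{N−1}(p⁰Tᵗ·((T−I)h))² − (λω/(2N))‖h‖². -/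
open Finset Matrix

/-!
From `t = 1` on the chain sits at its stationary row `π = (1 - α, α)`, so every increment
`p⁰Tᵗ⁺¹ - p⁰Tᵗ` and every drift `p⁰Tᵗ(T - I)h` with `t ≥ 1` vanishes and both sums collapse to
their `t = 0` term. What remains is the quadratic objective
`Q(h) = d·h - (λ/2)(d·h)² - (λω/2)‖h‖²` with `d = p⁰T - p⁰ = (½ - α, α - ½)`, whose stationarity equation
`λ((d·h)d + ωh) = d` is solved by `h = (-γ̃, γ̃)`. Expanding around a solution `h` gives
`Q(h) - Q(h + e) = (λ/2)((d·e)² + ω‖e‖²)`, which is positive for `e ≠ 0`.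
-/

theorem Finset.sum_range_eq_apply_zero {M : Type*} [AddCommMonoid M] {f : ℕ → M}
    (hf : ∀ t, f (t + 1) = 0) {N : ℕ} (hN : 1 ≤ N) : ∑ t ∈ range N, f t = f 0 := by
  obtain ⟨M, rfl⟩ := Nat.exists_eq_add_of_le' hN
  simp [Finset.sum_range_succ', hf]

section StationaryAfterOneStep

variable {R n : Type*} [CommRing R] [Fintype n] [DecidableEq n] {T : Matrix n n R} {p : n → R}

theorem vecMul_pow_eq_of_stationary (hstat : p ᵥ* T ᵥ* T = p ᵥ* T) {N : ℕ} (hN : 1 ≤ N) :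
    p ᵥ* T ^ N = p ᵥ* T := by
  induction N, hN using Nat.le_induction with
  | base => rw [pow_one]
  | succ N _ ih => rw [pow_succ, ← vecMul_vecMul, ih, hstat]

theorem sum_range_increment_eq_of_stationary (hstat : p ᵥ* T ᵥ* T = p ᵥ* T)
    {N : ℕ} (hN : 1 ≤ N) (h : n → R) :
    ∑ t ∈ range N, ((p ᵥ* T ^ (t + 1) - p ᵥ* T ^ t) ⬝ᵥ h) • (p ᵥ* T ^ (t + 1) - p ᵥ* T ^ t)
      = ((p ᵥ* T - p) ⬝ᵥ h) • (p ᵥ* T - p) := by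
  rw [Finset.sum_range_eq_apply_zero _ hN]
  · simp
  · intro t
    rw [vecMul_pow_eq_of_stationary hstat (by omega), vecMul_pow_eq_of_stationary hstat (by omega)]
    simp

theorem sum_range_drift_eq_of_stationary (hstat : p ᵥ* T ᵥ* T = p ᵥ* T)
    {N : ℕ} (hN : 1 ≤ N) (F : R → R) (hF : F 0 = 0) (g : n → R) :
    ∑ t ∈ range N, F ((p ᵥ* T ^ t) ⬝ᵥ ((T - 1) *ᵥ g)) = F ((p ᵥ* T - p) ⬝ᵥ g) := by
  have hdrift : ∀ q : n → R, q ⬝ᵥ ((T - 1) *ᵥ g) = (q ᵥ* T - q) ⬝ᵥ g := fun q => by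
    rw [dotProduct_mulVec, vecMul_sub, vecMul_one]
  rw [Finset.sum_range_eq_apply_zero _ hN]
  · rw [pow_zero, vecMul_one, hdrift]
  · intro t
    rw [hdrift, vecMul_pow_eq_of_stationary hstat (by omega), hstat, sub_self, zero_dotProduct, hF]

end StationaryAfterOneStep

section RegularizedObjective

variable {n : Type*} [Fintype n]

noncomputable def regularizedObjective (lam ω : ℝ) (d g : n → ℝ) : ℝ :=
  d ⬝ᵥ g - lam / 2 * (d ⬝ᵥ g) ^ 2 - lam * ω / 2 * ∑ i, g i ^ 2

theorem regularizedObjective_sub_add {lam ω : ℝ} {d h : n → ℝ}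
    (hcrit : lam • ((d ⬝ᵥ h) • d + ω • h) = d) (e : n → ℝ) :
    regularizedObjective lam ω d h - regularizedObjective lam ω d (h + e)
      = lam / 2 * ((d ⬝ᵥ e) ^ 2 + ω * (e ⬝ᵥ e)) := by
  have hcrit_e := congrArg (· ⬝ᵥ e) hcrit
  simp only [add_dotProduct, smul_dotProduct, smul_eq_mul] at hcrit_e
  have hnorm : ∑ i, (h + e) i ^ 2 = ∑ i, h i ^ 2 + 2 * (h ⬝ᵥ e) + e ⬝ᵥ e := by
    simp only [Pi.add_apply, dotProduct, Finset.mul_sum, ← Finset.sum_add_distrib]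
    exact Finset.sum_congr rfl fun i _ => by ring
  simp only [regularizedObjective, dotProduct_add, hnorm]
  linear_combination hcrit_e

theorem regularizedObjective_lt_of_critical {lam ω : ℝ} (hlam : 0 < lam) (hω : 0 < ω)
    {d h : n → ℝ} (hcrit : lam • ((d ⬝ᵥ h) • d + ω • h) = d) {g : n → ℝ} (hg : g ≠ h) :
    regularizedObjective lam ω d g < regularizedObjective lam ω d h := by
  have hsub := regularizedObjective_sub_add hcrit (g - h)
  rw [add_sub_cancel] at hsub
  have he : 0 < (g - h) ⬝ᵥ (g - h) :=
    lt_of_le_of_ne (Finset.sum_nonneg fun i _ => mul_self_nonneg _)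
      (Ne.symm (dotProduct_self_eq_zero.not.mpr (sub_ne_zero.mpr hg)))
  nlinarith [sq_nonneg (d ⬝ᵥ (g - h)), mul_pos hlam hω]

end RegularizedObjective

theorem antidiagonal_critical {lam ω c γ : ℝ} (hγ : lam * (2 * c ^ 2 + ω) * γ = c) :
    lam • ((![-c, c] ⬝ᵥ ![-γ, γ]) • ![-c, c] + ω • ![-γ, γ]) = ![-c, c] := by
  ext i
  fin_cases i
  · simp [dotProduct, Fin.sum_univ_two]
    linear_combination (-1) * hγ
  · simp [dotProduct, Fin.sum_univ_two]
    linear_combination hγ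

theorem stmt_9_general (α : ℝ)
    (lam ω : ℝ) (hlam : 0 < lam) (hω : 0 < ω)
    (T : Matrix (Fin 2) (Fin 2) ℝ) (hT : T = !![1 - α, α; 1 - α, α])
    (p0 : Fin 2 → ℝ) (hp0 : p0 = ![1 / 2, 1 / 2])
    (γt : ℝ) (hγt : γt = (2 * α - 1) / (lam * (4 * α ^ 2 - 4 * α + 2 * ω + 1)))
    (h : Fin 2 → ℝ) (hh : h = ![-γt, γt]) :
    ∀ N : ℕ, 1 ≤ N →
      (lam • (∑ t ∈ Finset.range N,
              (((p0 ᵥ* T ^ (t + 1) - p0 ᵥ* T ^ t) ⬝ᵥ h) •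
                (p0 ᵥ* T ^ (t + 1) - p0 ᵥ* T ^ t))
            + ω • h)
        = p0 ᵥ* T ^ N - p0) ∧
      (∀ L : (Fin 2 → ℝ) → ℝ,
        (∀ g : Fin 2 → ℝ,
          L g = (1 / N) * ∑ t ∈ Finset.range N,
                  ((p0 ᵥ* T ^ t) ⬝ᵥ ((T - 1) *ᵥ g))
                - (lam / (2 * N)) * ∑ t ∈ Finset.range N,
                  ((p0 ᵥ* T ^ t) ⬝ᵥ ((T - 1) *ᵥ g)) ^ 2
                - (lam * ω / (2 * N)) * ∑ i, (g i) ^ 2) →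
        ∀ g : Fin 2 → ℝ, g ≠ h → L g < L h) := by
  intro N hN
  have hstat : p0 ᵥ* T ᵥ* T = p0 ᵥ* T := by
    subst hT hp0
    ext i
    fin_cases i <;> simp <;> ring
  have hd : p0 ᵥ* T - p0 = ![-(α - 1 / 2), α - 1 / 2] := by
    subst hT hp0
    ext i
    fin_cases i <;> simp <;> ring
  have hcrit : lam • (((p0 ᵥ* T - p0) ⬝ᵥ h) • (p0 ᵥ* T - p0) + ω • h) = p0 ᵥ* T - p0 := by
    rw [hd, hh]
    refine antidiagonal_critical ?_
    have hD : 4 * α ^ 2 - 4 * α + 2 * ω + 1 ≠ 0 := by nlinarith [sq_nonneg (2 * α - 1)]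
    rw [hγt, mul_div_assoc', div_eq_iff (mul_ne_zero hlam.ne' hD)]
    ring
  refine ⟨?_, fun L hL g hg => ?_⟩
  · rw [sum_range_increment_eq_of_stationary hstat hN, vecMul_pow_eq_of_stationary hstat hN]
    exact hcrit
  · have hLQ : ∀ g, L g = 1 / N * regularizedObjective lam ω (p0 ᵥ* T - p0) g := fun g => by
      rw [hL, sum_range_drift_eq_of_stationary hstat hN (fun x => x) rfl,
        sum_range_drift_eq_of_stationary hstat hN (fun x => x ^ 2) (zero_pow two_ne_zero),
        regularizedObjective]
      ring
    rw [hLQ, hLQ]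
    have hNpos : (0 : ℝ) < 1 / N := by positivity
    exact mul_lt_mul_of_pos_left (regularizedObjective_lt_of_critical hlam hω hcrit hg) hNpos

/-- Two-state chain with rows `(1−α, α)` and `p⁰ = (1/2, 1/2)`: for every `N ≥ 1` the
vector `h = (−γ̃, γ̃)` with `γ̃ = (2α−1)/(λ(4α²−4α+2ω+1))` satisfies the stationarity
equation of the trajectory-regularized objective, and hence is its unique global
maximizer. -/
theorem stmt_9 (α : ℝ) (hα : α ∈ Set.Icc (0 : ℝ) 1)
    (lam ω : ℝ) (hlam : 0 < lam) (hω : 0 < ω)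
    (T : Matrix (Fin 2) (Fin 2) ℝ) (hT : T = !![1 - α, α; 1 - α, α])
    (p0 : Fin 2 → ℝ) (hp0 : p0 = ![1 / 2, 1 / 2])
    (γt : ℝ) (hγt : γt = (2 * α - 1) / (lam * (4 * α ^ 2 - 4 * α + 2 * ω + 1)))
    (h : Fin 2 → ℝ) (hh : h = ![-γt, γt]) :
    ∀ N : ℕ, 1 ≤ N →
      (lam • (∑ t ∈ Finset.range N,
              (((p0 ᵥ* T ^ (t + 1) - p0 ᵥ* T ^ t) ⬝ᵥ h) •
                (p0 ᵥ* T ^ (t + 1) - p0 ᵥ* T ^ t))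
            + ω • h)
        = p0 ᵥ* T ^ N - p0) ∧
      (∀ L : (Fin 2 → ℝ) → ℝ,
        (∀ g : Fin 2 → ℝ,
          L g = (1 / N) * ∑ t ∈ Finset.range N,
                  ((p0 ᵥ* T ^ t) ⬝ᵥ ((T - 1) *ᵥ g))
                - (lam / (2 * N)) * ∑ t ∈ Finset.range N,
                  ((p0 ᵥ* T ^ t) ⬝ᵥ ((T - 1) *ᵥ g)) ^ 2
                - (lam * ω / (2 * N)) * ∑ i, (g i) ^ 2) →
        ∀ g : Fin 2 → ℝ, g ≠ h → L g < L h) :=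
  stmt_9_general α lam ω hlam hω T hT p0 hp0 γt hγt h hh
end

section
/- Let T be the 4×4 matrix with T₁₂ = T₂₃ = T₃₄ = T₄₄ = 1 and all other entries 0, let p⁰ = (1, 0, 0, 0), let λ > 0, ω > 0, and N ≥ 4. Let h ∈ ℝ⁴ be the unique solution of the stationarity equation λ · [ Σ_{t=0}^{N−1} (p⁰(Tᵗ⁺¹ − Tᵗ) · h) · p⁰(Tᵗ⁺¹ − Tᵗ) + ω h ] = p⁰ Tᴺ − p⁰ (equivalently, the unique global maximizer of the trajectory-regularized objective). Then the components of h are strictly increasing: h₁ < h₂ < h₃ < h₄. -/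
open Finset Matrix

/-!
The chain reaches its absorbing state after three steps, so only the increments
`e₁ - e₀`, `e₂ - e₁`, `e₃ - e₂` enter the stationarity equation, which becomes the
tridiagonal system `λ(Lh + ωh) = e₃ - e₀` with `L` the path-graph Laplacian. The operator
`h ↦ Σₜ (dₜ ⬝ h) dₜ + ωh` is positive definite, hence injective, and the system is
antisymmetric under `i ↦ 3 - i`, which leads to the explicit solution
`(-(3 + ω), -1, 1, 3 + ω) / (λ(ω² + 4ω + 2))`.
-/

theorem injective_sum_dotProduct_smul_add_smul {ι n : Type*} [Fintype n]
    (s : Finset ι) (d : ι → n → ℝ) {ω : ℝ} (hω : 0 < ω) :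
    Function.Injective fun h : n → ℝ => ∑ t ∈ s, (d t ⬝ᵥ h) • d t + ω • h := by
  intro g h hgh
  set x := g - h
  have hx : ∑ t ∈ s, (d t ⬝ᵥ x) • d t + ω • x = 0 := by
    simp only [x, dotProduct_sub, sub_smul, sum_sub_distrib, smul_sub]
    linear_combination (norm := module) hgh
  have hquad : ∑ t ∈ s, (d t ⬝ᵥ x) ^ 2 + ω * (x ⬝ᵥ x) = 0 := by
    have := congrArg (· ⬝ᵥ x) hx
    simpa only [add_dotProduct, sum_dotProduct, smul_dotProduct, smul_eq_mul, sq,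
      zero_dotProduct] using this
  have hxx : x ⬝ᵥ x = 0 := by
    have h1 : 0 ≤ ∑ t ∈ s, (d t ⬝ᵥ x) ^ 2 := sum_nonneg fun _ _ => sq_nonneg _
    have h2 : 0 ≤ x ⬝ᵥ x := sum_nonneg fun i _ => mul_self_nonneg (x i)
    nlinarith
  exact sub_eq_zero.mp (dotProduct_self_eq_zero.mp hxx)

def chainMatrix : Matrix (Fin 4) (Fin 4) ℝ := !![0, 1, 0, 0; 0, 0, 1, 0; 0, 0, 0, 1; 0, 0, 0, 1]

def chainTrajectory (t : ℕ) : Fin 4 → ℝ := ![1, 0, 0, 0] ᵥ* chainMatrix ^ t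

theorem vecMul_chainMatrix (v : Fin 4 → ℝ) : v ᵥ* chainMatrix = ![0, v 0, v 1, v 2 + v 3] := by
  ext j
  fin_cases j <;> simp [chainMatrix, vecMul, dotProduct, Fin.sum_univ_four]

theorem chainTrajectory_succ (t : ℕ) :
    chainTrajectory (t + 1) =
      ![0, chainTrajectory t 0, chainTrajectory t 1, chainTrajectory t 2 + chainTrajectory t 3] := by
  rw [chainTrajectory, pow_succ, ← vecMul_vecMul]
  exact vecMul_chainMatrix _

theorem chainTrajectory_zero : chainTrajectory 0 = ![1, 0, 0, 0] := by
  simp [chainTrajectory]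

theorem chainTrajectory_one : chainTrajectory 1 = ![0, 1, 0, 0] := by
  rw [chainTrajectory_succ, chainTrajectory_zero]; simp

theorem chainTrajectory_two : chainTrajectory 2 = ![0, 0, 1, 0] := by
  rw [chainTrajectory_succ, chainTrajectory_one]; simp

theorem chainTrajectory_of_three_le {t : ℕ} (ht : 3 ≤ t) : chainTrajectory t = ![0, 0, 0, 1] := by
  induction t, ht using Nat.le_induction with
  | base => rw [chainTrajectory_succ, chainTrajectory_two]; simp
  | succ t _ ih => rw [chainTrajectory_succ, ih]; simp

theorem sum_range_chainIncrement {N : ℕ} (hN : 3 ≤ N) (h : Fin 4 → ℝ) :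
    ∑ t ∈ range N, ((chainTrajectory (t + 1) - chainTrajectory t) ⬝ᵥ h) •
        (chainTrajectory (t + 1) - chainTrajectory t) =
      ![h 0 - h 1, 2 * h 1 - h 0 - h 2, 2 * h 2 - h 1 - h 3, h 3 - h 2] := by
  rw [← sum_subset (range_subset_range.mpr hN)]
  · simp only [sum_range_succ, range_zero, sum_empty, zero_add, Nat.reduceAdd,
      chainTrajectory_zero, chainTrajectory_one, chainTrajectory_two,
      chainTrajectory_of_three_le le_rfl]
    ext i
    fin_cases i <;> simp [dotProduct, Fin.sum_univ_four] <;> ring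
  · intro t _ ht
    have h3 : 3 ≤ t := by simpa using ht
    rw [chainTrajectory_of_three_le h3, chainTrajectory_of_three_le (by omega), sub_self,
      smul_zero]

noncomputable def stationarySolution (lam ω : ℝ) : Fin 4 → ℝ :=
  (lam * (ω ^ 2 + 4 * ω + 2))⁻¹ • ![-(3 + ω), -1, 1, 3 + ω]

theorem stationarySolution_spec {lam ω : ℝ} (hlam : lam ≠ 0) (hω : 0 ≤ ω) {N : ℕ} (hN : 3 ≤ N) :
    lam • (∑ t ∈ range N, ((chainTrajectory (t + 1) - chainTrajectory t) ⬝ᵥ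
          stationarySolution lam ω) • (chainTrajectory (t + 1) - chainTrajectory t) +
        ω • stationarySolution lam ω) =
      chainTrajectory N - ![1, 0, 0, 0] := by
  have hD : ω ^ 2 + 4 * ω + 2 ≠ 0 := by positivity
  rw [sum_range_chainIncrement hN, chainTrajectory_of_three_le hN]
  ext i
  fin_cases i <;> simp [stationarySolution, hlam] <;> field_simp <;> ring

theorem stationarySolution_strictMono {lam ω : ℝ} (hlam : 0 < lam) (hω : 0 ≤ ω) :
    StrictMono (stationarySolution lam ω) := by
  have hc : 0 < (lam * (ω ^ 2 + 4 * ω + 2))⁻¹ := by positivity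
  rw [Fin.strictMono_iff_lt_succ]
  intro i
  fin_cases i <;>
    exact mul_lt_mul_of_pos_left (by simp <;> linarith) hc

/-- Four-state irreversible chain `s₁ → s₂ → s₃ → s₄`, `ω > 0`: the stationarity
equation of the trajectory-regularized objective has a unique solution `h`, and its
components are strictly increasing: `h₁ < h₂ < h₃ < h₄`. -/
theorem stmt_12 (T : Matrix (Fin 4) (Fin 4) ℝ)
    (hT : T = !![0, 1, 0, 0; 0, 0, 1, 0; 0, 0, 0, 1; 0, 0, 0, 1])
    (p0 : Fin 4 → ℝ) (hp0 : p0 = ![1, 0, 0, 0])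
    (lam ω : ℝ) (hlam : 0 < lam) (hω : 0 < ω)
    (N : ℕ) (hN : 4 ≤ N) :
    (∃! h : Fin 4 → ℝ,
      lam • (∑ t ∈ Finset.range N,
              (((p0 ᵥ* T ^ (t + 1) - p0 ᵥ* T ^ t) ⬝ᵥ h) •
                (p0 ᵥ* T ^ (t + 1) - p0 ᵥ* T ^ t))
            + ω • h)
        = p0 ᵥ* T ^ N - p0) ∧
    (∀ h : Fin 4 → ℝ,
      (lam • (∑ t ∈ Finset.range N,
              (((p0 ᵥ* T ^ (t + 1) - p0 ᵥ* T ^ t) ⬝ᵥ h) •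
                (p0 ᵥ* T ^ (t + 1) - p0 ᵥ* T ^ t))
            + ω • h)
        = p0 ᵥ* T ^ N - p0) →
      h 0 < h 1 ∧ h 1 < h 2 ∧ h 2 < h 3) := by
  subst hT hp0
  have hsol := stationarySolution_spec hlam.ne' hω.le (show 3 ≤ N by omega)
  have hinj := (smul_right_injective (Fin 4 → ℝ) hlam.ne').comp
    (injective_sum_dotProduct_smul_add_smul (range N)
      (fun t => chainTrajectory (t + 1) - chainTrajectory t) hω)
  refine ⟨⟨_, hsol, fun h hh => hinj (hh.trans hsol.symm)⟩, fun h hh => ?_⟩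
  have hmono := stationarySolution_strictMono hlam hω.le
  rw [hinj (hh.trans hsol.symm)]
  exact ⟨hmono (by decide), hmono (by decide), hmono (by decide)⟩
end
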